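/- arXiv:1403.6254 — 2 statements merged into one kernel-verified Lean document; each statement's English description precedes it below -/
import Mathlib

section
/- Let C be the elliptic curve over ℚ given by Y² + Y = X³ - X² - 7X + 10. For every natural number n ≥ 1, the point n·(4,-6) obtained by adding the point P = (4,-6) to itself n times under the elliptic curve group law is not the identity; i.e., P = (4,-6) has infinite order in C(ℚ). -/
/-! On `B`, `3P = (5/4, -15/8)`, whose `x`-coordinate has `2`-adic valuation `-2`. If `Q = (x, y)`
has `v₂(x) = -2k < 0`, the curve equation forces `v₂(y) = -3k`, so the tangent slope
`λ = (3x² - 2x - 7)/(2y + 1)` has valuation `-(k + 1)` and `x(2Q) = λ² - 2x + 1` has valuation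
`-2(k + 1)`. Hence the points `2ᵏ · 3P` are pairwise distinct, which is impossible if `P` had
finite order. -/

/-- The elliptic curve `B : Y² + Y = X³ - X² - 7X + 10` over `ℚ`. -/
def Bcurve : WeierstrassCurve.Affine ℚ :=
  { a₁ := 0, a₂ := -1, a₃ := 1, a₄ := -7, a₆ := 10 }

open Function WeierstrassCurve.Affine

theorem not_isOfFinAddOrder_of_injective_nsmul_comp {G : Type*} [AddMonoid G] {a : G}
    {f : ℕ → ℕ} (hf : Injective fun k => f k • a) : ¬IsOfFinAddOrder a := fun ha =>
  (Set.infinite_range_of_injective hf).mono (Set.range_comp_subset_range f (· • a))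
    ha.finite_multiples

theorem ne_zero_of_padicValRat_ne_zero {p : ℕ} {q : ℚ} (h : padicValRat p q ≠ 0) :
    q ≠ 0 := by
  rintro rfl
  exact h padicValRat.zero

namespace padicValRat

variable {p : ℕ} {q r : ℚ}

theorem ofNat_nonneg (n : ℕ) [n.AtLeastTwo] : 0 ≤ padicValRat p (OfNat.ofNat n : ℚ) :=
  zero_le_padicValRat_of_nat n

variable [Fact p.Prime]

theorem add_eq_left_of_neg (hq : padicValRat p q < 0) (h : padicValRat p q < padicValRat p r) :
    padicValRat p (q + r) = padicValRat p q := by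
  rcases eq_or_ne r 0 with rfl | hr
  · rw [add_zero]
  refine add_eq_of_lt (fun hqr => ?_) (ne_zero_of_padicValRat_ne_zero hq.ne) hr h
  rw [eq_neg_of_add_eq_zero_right hqr, padicValRat.neg] at h
  exact h.false

theorem sub_eq_left_of_neg (hq : padicValRat p q < 0) (h : padicValRat p q < padicValRat p r) :
    padicValRat p (q - r) = padicValRat p q := by
  rw [sub_eq_add_neg]
  exact add_eq_left_of_neg hq (by rwa [padicValRat.neg])

theorem sq_add_self_of_neg (h : padicValRat p (q ^ 2 + q) < 0) :
    padicValRat p (q ^ 2 + q) = 2 * padicValRat p q := by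
  have hq : padicValRat p q < 0 := by
    by_contra! hq
    have := min_le_padicValRat_add (p := p) (ne_zero_of_padicValRat_ne_zero h.ne)
    rw [padicValRat.pow] at this
    omega
  have hsq : padicValRat p (q ^ 2) = 2 * padicValRat p q := by
    rw [padicValRat.pow]; push_cast; ring
  rw [add_eq_left_of_neg] <;> omega

end padicValRat

namespace WeierstrassCurve.Affine.Point

-- The point at infinity gets the junk value `0`.
def padicValX {W : WeierstrassCurve.Affine ℚ} (p : ℕ) : W.Point → ℤ
  | .zero => 0
  | .some x _ _ => padicValRat p x

end WeierstrassCurve.Affine.Point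

local notation "v₂" => padicValRat 2

section TwoAdic

variable {x y : ℚ}

theorem padicValRat_two_two : v₂ 2 = 1 := by
  simpa using padicValRat.self (p := 2) one_lt_two

theorem padicValRat_two_two_mul (hx : x ≠ 0) : v₂ (2 * x) = v₂ x + 1 := by
  rw [padicValRat.mul two_ne_zero hx, padicValRat_two_two, add_comm]

theorem padicValRat_two_two_mul_add_one (hy : v₂ y < -1) : v₂ (2 * y + 1) = v₂ y + 1 := by
  have hy0 : y ≠ 0 := ne_zero_of_padicValRat_ne_zero (p := 2) (by omega)
  have h2y := padicValRat_two_two_mul hy0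
  rw [padicValRat.add_eq_left_of_neg] <;> linarith [padicValRat.one (p := 2)]

end TwoAdic

namespace Bcurve

variable {x y l : ℚ} {k : ℤ}

theorem equation_iff_eq : Bcurve.Equation x y ↔ y ^ 2 + y = x ^ 3 - x ^ 2 - 7 * x + 10 := by
  rw [equation_iff]
  simp only [Bcurve]
  constructor <;> intro h <;> linarith

theorem negY_eq (x y : ℚ) : Bcurve.negY x y = -y - 1 := by
  simp [negY, Bcurve]

theorem slope_self_eq (hy : y ≠ Bcurve.negY x y) :
    Bcurve.slope x x y y = (3 * x ^ 2 - 2 * x - 7) / (2 * y + 1) := by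
  rw [slope_of_Y_ne rfl hy, negY_eq]
  simp only [Bcurve]
  ring

theorem addX_self_eq (x l : ℚ) : Bcurve.addX x x l = l ^ 2 - 2 * x + 1 := by
  simp only [addX, Bcurve]
  ring

theorem padicValRat_two_rhs (hk : 0 < k) (hx : v₂ x = -2 * k) :
    v₂ (x ^ 3 - x ^ 2 - 7 * x + 10) = -6 * k := by
  have hx0 : x ≠ 0 := ne_zero_of_padicValRat_ne_zero (p := 2) (by omega)
  have h3 : v₂ (x ^ 3) = -6 * k := by rw [padicValRat.pow, hx]; push_cast; ring
  have h2 : v₂ (x ^ 2) = -4 * k := by rw [padicValRat.pow, hx]; push_cast; ring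
  have h7 : -2 * k ≤ v₂ (7 * x) := by
    rw [padicValRat.mul (by norm_num) hx0, hx]
    linarith [padicValRat.ofNat_nonneg (p := 2) 7]
  have e₁ : v₂ (x ^ 3 - x ^ 2) = -6 * k := by
    rw [padicValRat.sub_eq_left_of_neg] <;> linarith
  have e₂ : v₂ (x ^ 3 - x ^ 2 - 7 * x) = -6 * k := by
    rw [padicValRat.sub_eq_left_of_neg] <;> linarith
  rw [padicValRat.add_eq_left_of_neg] <;> linarith [padicValRat.ofNat_nonneg (p := 2) 10]

theorem padicValRat_two_slope_self (hk : 0 < k) (hx : v₂ x = -2 * k) (hy : v₂ y = -3 * k) :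
    v₂ ((3 * x ^ 2 - 2 * x - 7) / (2 * y + 1)) = -(k + 1) := by
  have hx0 : x ≠ 0 := ne_zero_of_padicValRat_ne_zero (p := 2) (by omega)
  have h3 : v₂ (3 * x ^ 2) = -4 * k := by
    rw [padicValRat.mul (by norm_num) (pow_ne_zero 2 hx0), show v₂ 3 = 0 by simp [padicValRat],
      padicValRat.pow, hx]
    push_cast; ring
  have h2 := padicValRat_two_two_mul hx0
  have e₁ : v₂ (3 * x ^ 2 - 2 * x) = -4 * k := by
    rw [padicValRat.sub_eq_left_of_neg] <;> linarith
  have hnum : v₂ (3 * x ^ 2 - 2 * x - 7) = -4 * k := by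
    rw [padicValRat.sub_eq_left_of_neg] <;> linarith [padicValRat.ofNat_nonneg (p := 2) 7]
  have hden : v₂ (2 * y + 1) = -3 * k + 1 := by
    rw [padicValRat_two_two_mul_add_one] <;> linarith
  rw [padicValRat.div (ne_zero_of_padicValRat_ne_zero (p := 2) (by omega))
    (ne_zero_of_padicValRat_ne_zero (p := 2) (by omega)), hnum, hden]
  ring

theorem padicValRat_two_addX_self (hk : 0 < k) (hx : v₂ x = -2 * k) (hl : v₂ l = -(k + 1)) :
    v₂ (l ^ 2 - 2 * x + 1) = -2 * (k + 1) := by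
  have hx0 : x ≠ 0 := ne_zero_of_padicValRat_ne_zero (p := 2) (by omega)
  have hl2 : v₂ (l ^ 2) = -2 * (k + 1) := by rw [padicValRat.pow, hl]; push_cast; ring
  have h2 := padicValRat_two_two_mul hx0
  have e₁ : v₂ (l ^ 2 - 2 * x) = -2 * (k + 1) := by
    rw [padicValRat.sub_eq_left_of_neg] <;> linarith
  rw [padicValRat.add_eq_left_of_neg] <;> linarith [padicValRat.one (p := 2)]

theorem padicValX_two_nsmul {Q : Bcurve.Point} (hk : 0 < k) (hQ : Q.padicValX 2 = -2 * k) :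
    (2 • Q).padicValX 2 = -2 * (k + 1) := by
  cases Q with
  | zero => simp [Point.padicValX] at hQ; omega
  | some x y h =>
    have hx : v₂ x = -2 * k := hQ
    have hy : v₂ y = -3 * k := by
      have hE := equation_iff_eq.1 ((nonsingular_iff' x y).1 h).1
      have hrhs : v₂ (y ^ 2 + y) = -6 * k := by rw [hE, padicValRat_two_rhs hk hx]
      have := padicValRat.sq_add_self_of_neg (p := 2) (q := y) (by omega)
      omega
    have hY : y ≠ Bcurve.negY x y := by
      rw [negY_eq]
      intro hy'
      have := padicValRat_two_two_mul_add_one (y := y) (by omega)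
      rw [show 2 * y + 1 = 0 by linarith, padicValRat.zero] at this
      omega
    rw [two_nsmul, Point.add_self_of_Y_ne hY]
    show v₂ (Bcurve.addX x x _) = _
    rw [addX_self_eq, slope_self_eq hY]
    exact padicValRat_two_addX_self hk hx (padicValRat_two_slope_self hk hx hy)

theorem nonsingular_four_neg_six : Bcurve.Nonsingular 4 (-6) := by
  rw [nonsingular_iff, equation_iff]
  norm_num [Bcurve]

theorem nonsingular_two_neg_one : Bcurve.Nonsingular 2 (-1) := by
  rw [nonsingular_iff, equation_iff]
  norm_num [Bcurve]

theorem nonsingular_five_div_four : Bcurve.Nonsingular (5 / 4) (-15 / 8) := by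
  rw [nonsingular_iff, equation_iff]
  norm_num [Bcurve]

theorem two_nsmul_four_neg_six :
    2 • Point.some 4 (-6) nonsingular_four_neg_six = .some 2 (-1) nonsingular_two_neg_one := by
  have hY : (-6 : ℚ) ≠ Bcurve.negY 4 (-6) := by rw [negY_eq]; norm_num
  rw [two_nsmul, Point.add_self_of_Y_ne hY, Point.some.injEq, slope_of_Y_ne rfl hY]
  norm_num [Bcurve, addX, addY, negAddY, negY]

theorem three_nsmul_four_neg_six :
    3 • Point.some 4 (-6) nonsingular_four_neg_six =
      .some (5 / 4) (-15 / 8) nonsingular_five_div_four := by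
  have hX : (2 : ℚ) ≠ 4 := by norm_num
  rw [succ_nsmul, two_nsmul_four_neg_six, Point.add_of_X_ne hX, Point.some.injEq,
    slope_of_X_ne hX]
  norm_num [Bcurve, addX, addY, negAddY, negY]

theorem padicValX_two_pow_nsmul_three_nsmul (k : ℕ) :
    (2 ^ k • 3 • Point.some 4 (-6) nonsingular_four_neg_six).padicValX 2 = -2 * (k + 1) := by
  induction k with
  | zero =>
    rw [pow_zero, one_nsmul, three_nsmul_four_neg_six]
    show v₂ (5 / 4) = _
    rw [padicValRat.div (by norm_num) (by norm_num), show (4 : ℚ) = 2 ^ 2 by norm_num,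
      padicValRat.pow, padicValRat_two_two, show v₂ 5 = 0 by simp [padicValRat]]
    norm_num
  | succ k ih =>
    rw [pow_succ, mul_nsmul, padicValX_two_nsmul (by omega) ih]
    push_cast
    ring

end Bcurve

/-- The point `P = (4, -6)` is a (nonsingular) rational point on
`Y² + Y = X³ - X² - 7X + 10`, and for every `n ≥ 1` the multiple `n • P` is not the
identity; i.e. `P` has infinite order in the group of rational points. -/
theorem stmt_9 :
    ∃ h : Bcurve.Nonsingular 4 (-6),
      ∀ n : ℕ, 1 ≤ n → n • (WeierstrassCurve.Affine.Point.some _ _ h) ≠ 0 := by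
  refine ⟨Bcurve.nonsingular_four_neg_six, fun n hn hP => ?_⟩
  have hinj :
      Injective fun k => (3 * 2 ^ k) • Point.some _ _ Bcurve.nonsingular_four_neg_six := by
    refine Injective.of_comp (f := Point.padicValX 2) fun a b hab => ?_
    simp only [comp_apply, mul_nsmul, Bcurve.padicValX_two_pow_nsmul_three_nsmul] at hab
    omega
  exact not_isOfFinAddOrder_of_injective_nsmul_comp hinj
    (isOfFinAddOrder_iff_nsmul_eq_zero.2 ⟨n, hn, hP⟩)
end

section
/- Let (X, Y) be a real solution of Y² + Y = X³ - X² - 7X + 10. Then -(4X³ + 7X² - 6X + 19) < 0, so there is no real T with T² = -(4X³ + 7X² - 6X + 19). Consequently the curve over ℂ defined by the two equations Y² + Y = X³ - X² - 7X + 10 and T² = -(4X³ + 7X² - 6X + 19) has no real points: no triple (X, Y, T) of real numbers satisfies both equations simultaneously. -/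
/-- On every real point `(X, Y)` of `Y² + Y = X³ - X² - 7X + 10` one has
`4X³ + 7X² - 6X + 19 > 0`, hence `T² = -(4X³ + 7X² - 6X + 19)` has no real solution
`T`; so the curve `X_ns(11)` has no real points. -/
theorem stmt_15 (X Y : ℝ) (h : Y ^ 2 + Y = X ^ 3 - X ^ 2 - 7 * X + 10) :
    0 < 4 * X ^ 3 + 7 * X ^ 2 - 6 * X + 19 ∧
    ∀ T : ℝ, T ^ 2 ≠ -(4 * X ^ 3 + 7 * X ^ 2 - 6 * X + 19) := by
  have key : 0 < 4 * X ^ 3 + 7 * X ^ 2 - 6 * X + 19 := by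
    nlinarith [sq_nonneg (2*Y+1), sq_nonneg (X+3), sq_nonneg (X-2), sq_nonneg (X+1),
      sq_nonneg ((2*Y+1)*(X+3)), sq_nonneg (X*(X+3)), sq_nonneg (2*Y+1+X)]
  refine ⟨key, fun T hT => ?_⟩
  nlinarith [sq_nonneg T]
end
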